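/- arXiv:2410.12966 — 8 statements merged into one kernel-verified Lean document; each statement's English description precedes it below -/
import Mathlib

section
/- Every fair division instance with additive valuations and positive entitlements in which no item is a chore (i.e., every item j satisfies v_i(j) ≥ 0 for some agent i, so each item is a good or neutral, though goods need not be pure) admits a WEF1 allocation. -/
/-!
Run a weighted picking sequence: while items remain, among the agents that value some remaining
item nonnegatively, the one with the smallest ratio `p i / w i` of picks made to entitlement takes
its favourite remaining item. Every pick is worth at least `0` to its picker, so no agent values
its own bundle negatively. An item picked by `j` is worth something positive to `i` only while `i`
is still eligible, and then the selection rule keeps `i`'s pick count ahead of `j`'s in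
proportion to `w i / w j`, while each of `i`'s picks is worth at least as much to `i` as anything
picked after it. Charging `j`'s picks after the first one against `i`'s earlier picks gives
`w i * v i (A j \ {g}) ≤ w j * v i (A i)`, where `g` is `j`'s first pick.

The sequence is analysed backwards, by induction on the set of remaining items; its state is the
pick count `p i` of each agent and an upper bound `x i` on `i`'s value for any remaining item.
-/

open Finset Function

/-- Value of a bundle under an additive valuation. -/
noncomputable def bundleVal {ι : Type*} (v : ι → ℝ) (S : Finset ι) : ℝ := ∑ t ∈ S, v t

/-- Agent with valuation `v` and entitlement `wi` WEF1-envies the agent with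
entitlement `wj`, given bundles `Ai` and `Aj`. -/
def WEF1Envies {ι : Type*} [DecidableEq ι] (v : ι → ℝ) (wi wj : ℝ)
    (Ai Aj : Finset ι) : Prop :=
  bundleVal v Ai / wi < bundleVal v Aj / wj ∧
  (∀ g ∈ Aj, bundleVal v Ai / wi < bundleVal v (Aj.erase g) / wj) ∧
  (∀ c ∈ Ai, bundleVal v (Ai.erase c) / wi < bundleVal v Aj / wj)

theorem not_wef1Envies_of_le {ι : Type*} [DecidableEq ι] {v : ι → ℝ} {wi wj : ℝ}
    {Ai Aj : Finset ι} (hwi : 0 < wi) (hwj : 0 < wj) (hAi : 0 ≤ ∑ t ∈ Ai, v t)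
    (h : Aj = ∅ ∨ ∃ g ∈ Aj, wi * ∑ t ∈ Aj.erase g, max (v t) 0 ≤ wj * ∑ t ∈ Ai, v t) :
    ¬ WEF1Envies v wi wj Ai Aj := by
  rintro ⟨hlt, hlt_erase, -⟩
  rcases h with rfl | ⟨g, hg, hle⟩
  · simp only [bundleVal, sum_empty, zero_div] at hlt
    exact hlt.not_ge (div_nonneg hAi hwi.le)
  · have hpos : bundleVal v (Aj.erase g) ≤ ∑ t ∈ Aj.erase g, max (v t) 0 :=
      sum_le_sum fun t _ => le_max_left _ _
    refine (hlt_erase g hg).not_ge ((div_le_div_iff₀ hwj hwi).2 ?_)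
    unfold bundleVal at hpos ⊢
    nlinarith

theorem max_mul_le_add_max_mul {A A' c γ x : ℝ} (hγ : 0 ≤ γ) (hγx : γ ≤ x) (hc : 0 ≤ c)
    (hA : A' ≤ A + c) : max A' 0 * γ ≤ c * γ + max A 0 * x := by
  have hmax : max A' 0 ≤ max A 0 + c := max_le (by linarith [le_max_left A 0]) (by positivity)
  calc max A' 0 * γ ≤ (max A 0 + c) * γ := mul_le_mul_of_nonneg_right hmax hγ
    _ ≤ c * γ + max A 0 * x := by nlinarith [le_max_right A 0]

theorem add_max_mul_le_max_mul {a a' c y x : ℝ} (hy : 0 ≤ y) (hyx : y ≤ x) (hc : 0 ≤ c)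
    (ha : a + c ≤ a') (h : 0 ≤ a ∨ y = 0) : c * y + max a 0 * x ≤ max a' 0 * x := by
  have hx : 0 ≤ x := hy.trans hyx
  rcases h with ha0 | rfl
  · rw [max_eq_left ha0]
    nlinarith [le_max_left a' 0]
  · simpa using mul_le_mul_of_nonneg_right (max_le_max_right 0 (by linarith : a ≤ a')) hx

theorem mem_update_insert_iff {α ι : Type*} [DecidableEq α] [DecidableEq ι] {B : α → Finset ι}
    {k i : α} {g t : ι} : t ∈ update B k (insert g (B k)) i ↔ i = k ∧ t = g ∨ t ∈ B i := by
  rcases eq_or_ne i k with rfl | hik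
  · simp
  · simp [hik]

section PickingSequence

variable {α ι : Type*} {v : α → ι → ℝ} {w : α → ℝ}
  {p : α → ℕ} {x : α → ℝ} {R : Finset ι} {B : α → Finset ι} {k : α} {g : ι}

structure IsWeightedPick (v : α → ι → ℝ) (w : α → ℝ) (p : α → ℕ) (R : Finset ι) (k : α) (g : ι) :
    Prop where
  mem : g ∈ R
  nonneg : 0 ≤ v k g
  le_of_mem : ∀ t ∈ R, v k t ≤ v k g
  div_le : ∀ i, (∃ t ∈ R, 0 ≤ v i t) → (p k : ℝ) / w k ≤ p i / w i

/-- `B` allocates the remaining items `R`, in a state where agent `i` has made `p i` picks, each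
worth at least `x i` to `i`. Those picks, weighted by `w j`, are a credit against `i`'s envy
towards `j`'s future picks, reduced by the `p j - 1` picks `j` made after its first one; while `j`
has not picked yet, its first future pick is discounted instead. -/
structure IsWEF1Completion [DecidableEq ι] (v : α → ι → ℝ) (w : α → ℝ) (p : α → ℕ) (x : α → ℝ)
    (R : Finset ι) (B : α → Finset ι) : Prop where
  subset : ∀ i, B i ⊆ R
  existsUnique_mem : ∀ t ∈ R, ∃! i, t ∈ B i
  nonneg : ∀ i, ∀ t ∈ B i, 0 ≤ v i t
  envy_le : ∀ i j, i ≠ j → 1 ≤ p j →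
    w i * ∑ t ∈ B j, max (v i t) 0 ≤
      w j * ∑ t ∈ B i, v i t + max (w j * (p i : ℝ) - w i * ((p j : ℝ) - 1)) 0 * x i
  envy_erase_le : ∀ i j, i ≠ j → p j = 0 → B j = ∅ ∨ ∃ g ∈ B j,
    w i * ∑ t ∈ (B j).erase g, max (v i t) 0 ≤ w j * ∑ t ∈ B i, v i t + w j * (p i : ℝ) * x i

theorem isWEF1Completion_empty [DecidableEq ι] (hx : ∀ i, 0 ≤ x i) :
    IsWEF1Completion v w p x ∅ (fun _ => ∅) where
  subset _ := empty_subset _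
  existsUnique_mem := by simp
  nonneg := by simp
  envy_le i _ _ _ := by simpa using mul_nonneg (le_max_right _ 0) (hx i)
  envy_erase_le _ _ _ _ := Or.inl rfl

theorem IsWeightedPick.mul_le_mul_of_nonneg (hw : ∀ i, 0 < w i)
    (hkg : IsWeightedPick v w p R k g) {i : α} (hig : 0 ≤ v i g) :
    w i * (p k : ℝ) ≤ w k * p i := by
  have := hkg.div_le i ⟨g, hkg.mem, hig⟩
  rw [div_le_div_iff₀ (hw k) (hw i)] at this
  linarith

theorem exists_isWeightedPick [Fintype α] (hR : R.Nonempty) (hchore : ∀ t ∈ R, ∃ i, 0 ≤ v i t) :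
    ∃ k g, IsWeightedPick v w p R k g := by
  classical
  obtain ⟨t, ht⟩ := hR
  obtain ⟨i, hi⟩ := hchore t ht
  obtain ⟨k, hk, hkmin⟩ := (univ.filter fun i => ∃ t ∈ R, 0 ≤ v i t).exists_min_image
    (fun i => (p i : ℝ) / w i) ⟨i, mem_filter.2 ⟨mem_univ i, t, ht, hi⟩⟩
  obtain ⟨g, hg, hgmax⟩ := R.exists_max_image (v k) ⟨t, ht⟩
  obtain ⟨t', ht', hkt'⟩ := (mem_filter.1 hk).2
  exact ⟨k, g, hg, hkt'.trans (hgmax t' ht'), hgmax,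
    fun i hi => hkmin i (mem_filter.2 ⟨mem_univ i, hi⟩)⟩

namespace IsWEF1Completion

theorem notMem_of_pick [DecidableEq ι] (hB : IsWEF1Completion v w p x (R.erase g) B) (i : α) :
    g ∉ B i :=
  fun hgi => notMem_erase g R (hB.subset i hgi)

theorem envy_le_pick [DecidableEq α] [DecidableEq ι] (hw : ∀ i, 0 < w i) (hx : ∀ i, 0 ≤ x i)
    (hxR : ∀ i, ∀ t ∈ R, v i t ≤ x i) (hkg : IsWeightedPick v w p R k g)
    (hB : IsWEF1Completion v w (update p k (p k + 1)) (update x k (v k g)) (R.erase g) B)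
    {i j : α} (hij : i ≠ j) (hj : 1 ≤ p j) :
    w i * ∑ t ∈ update B k (insert g (B k)) j, max (v i t) 0 ≤
      w j * ∑ t ∈ update B k (insert g (B k)) i, v i t
        + max (w j * (p i : ℝ) - w i * ((p j : ℝ) - 1)) 0 * x i := by
  have hgB := hB.notMem_of_pick
  rcases eq_or_ne i k with rfl | hik
  · have hji := hij.symm
    have h := hB.envy_le i j hij (by simpa [update_of_ne hji] using hj)
    simp only [update_self, update_of_ne hji, sum_insert (hgB i), Nat.cast_add,
      Nat.cast_one] at h ⊢
    have := max_mul_le_add_max_mul (A := w j * (p i : ℝ) - w i * ((p j : ℝ) - 1))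
      (A' := w j * ((p i : ℝ) + 1) - w i * ((p j : ℝ) - 1))
      hkg.nonneg (hxR i g hkg.mem) (hw j).le (le_of_eq (by ring))
    linarith
  rcases eq_or_ne j k with rfl | hjk
  · have h := hB.envy_le i j hij (by simp)
    simp only [update_self, update_of_ne hik, sum_insert (hgB j), Nat.cast_add, Nat.cast_one,
      add_sub_cancel_right] at h ⊢
    -- if `g` is worth something to `i`, then `i` was eligible when `j` was chosen
    have hcase : 0 ≤ w j * (p i : ℝ) - w i * p j ∨ max (v i g) 0 = 0 := by
      by_cases hig : 0 ≤ v i g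
      · exact Or.inl (sub_nonneg.2 (hkg.mul_le_mul_of_nonneg hw hig))
      · exact Or.inr (max_eq_right (le_of_not_ge hig))
    have := add_max_mul_le_max_mul (a' := w j * (p i : ℝ) - w i * ((p j : ℝ) - 1))
      (le_max_right _ _) (max_le (hxR i g hkg.mem) (hx i)) (hw i).le (le_of_eq (by ring)) hcase
    linarith
  · have h := hB.envy_le i j hij (by simpa [update_of_ne hjk] using hj)
    simpa only [update_of_ne hik, update_of_ne hjk] using h

theorem envy_erase_le_pick [DecidableEq α] [DecidableEq ι] (hw : ∀ i, 0 < w i)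
    (hxR : ∀ i, ∀ t ∈ R, v i t ≤ x i) (hkg : IsWeightedPick v w p R k g)
    (hB : IsWEF1Completion v w (update p k (p k + 1)) (update x k (v k g)) (R.erase g) B)
    {i j : α} (hij : i ≠ j) (hj : p j = 0) :
    update B k (insert g (B k)) j = ∅ ∨ ∃ g' ∈ update B k (insert g (B k)) j,
      w i * ∑ t ∈ (update B k (insert g (B k)) j).erase g', max (v i t) 0 ≤
        w j * ∑ t ∈ update B k (insert g (B k)) i, v i t + w j * (p i : ℝ) * x i := by
  have hgB := hB.notMem_of_pick
  rcases eq_or_ne i k with rfl | hik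
  · have hji := hij.symm
    rcases hB.envy_erase_le i j hij (by simpa [update_of_ne hji] using hj) with hBj | ⟨g', hg', h⟩
    · exact Or.inl (by simpa [update_of_ne hji] using hBj)
    refine Or.inr ⟨g', by simpa [update_of_ne hji] using hg', ?_⟩
    simp only [update_self, update_of_ne hji, sum_insert (hgB i), Nat.cast_add,
      Nat.cast_one] at h ⊢
    have := mul_le_mul_of_nonneg_left (hxR i g hkg.mem)
      (mul_nonneg (hw j).le (Nat.cast_nonneg (p i)))
    linarith
  rcases eq_or_ne j k with rfl | hjk
  · refine Or.inr ⟨g, by simp, ?_⟩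
    have h := hB.envy_le i j hij (by simp)
    simp only [update_self, update_of_ne hik, erase_insert (hgB j), hj, zero_add,
      Nat.cast_one, sub_self, mul_zero, sub_zero] at h ⊢
    rwa [max_eq_left (mul_nonneg (hw j).le (Nat.cast_nonneg _))] at h
  · rcases hB.envy_erase_le i j hij (by simpa [update_of_ne hjk] using hj) with hBj | h
    · exact Or.inl (by simpa [update_of_ne hjk] using hBj)
    · simpa only [update_of_ne hik, update_of_ne hjk] using Or.inr h

theorem pick [DecidableEq α] [DecidableEq ι] (hw : ∀ i, 0 < w i) (hx : ∀ i, 0 ≤ x i)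
    (hxR : ∀ i, ∀ t ∈ R, v i t ≤ x i) (hkg : IsWeightedPick v w p R k g)
    (hB : IsWEF1Completion v w (update p k (p k + 1)) (update x k (v k g)) (R.erase g) B) :
    IsWEF1Completion v w p x R (update B k (insert g (B k))) where
  subset i t ht := by
    rcases mem_update_insert_iff.1 ht with ⟨-, rfl⟩ | ht
    exacts [hkg.mem, mem_of_mem_erase (hB.subset i ht)]
  existsUnique_mem t ht := by
    simp only [mem_update_insert_iff]
    by_cases htg : t = g
    · subst htg
      exact ⟨k, Or.inl ⟨rfl, rfl⟩, fun i hi => hi.elim And.left (absurd · (hB.notMem_of_pick i))⟩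
    · simpa [htg] using hB.existsUnique_mem t (mem_erase.2 ⟨htg, ht⟩)
  nonneg i t ht := by
    rcases mem_update_insert_iff.1 ht with ⟨rfl, rfl⟩ | ht
    exacts [hkg.nonneg, hB.nonneg i t ht]
  envy_le _ _ hij hj := hB.envy_le_pick hw hx hxR hkg hij hj
  envy_erase_le _ _ hij hj := hB.envy_erase_le_pick hw hxR hkg hij hj

end IsWEF1Completion

theorem exists_isWEF1Completion [Fintype α] [DecidableEq α] [DecidableEq ι]
    (hw : ∀ i, 0 < w i) (R : Finset ι) (hchore : ∀ t ∈ R, ∃ i, 0 ≤ v i t) (p : α → ℕ)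
    (x : α → ℝ) (hx : ∀ i, 0 ≤ x i) (hxR : ∀ i, ∀ t ∈ R, v i t ≤ x i) : ∃ B, IsWEF1Completion v w p x R B := by
  induction R using Finset.strongInduction generalizing p x with
  | H R ih =>
    rcases R.eq_empty_or_nonempty with rfl | hR
    · exact ⟨_, isWEF1Completion_empty hx⟩
    obtain ⟨k, g, hkg⟩ := exists_isWeightedPick (w := w) (p := p) hR hchore
    have hx' : ∀ i, 0 ≤ update x k (v k g) i :=
      (forall_update_iff x fun _ y => 0 ≤ y).2 ⟨hkg.nonneg, fun i _ => hx i⟩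
    have hxR' : ∀ i, ∀ t ∈ R.erase g, v i t ≤ update x k (v k g) i :=
      (forall_update_iff x fun i y => ∀ t ∈ R.erase g, v i t ≤ y).2
        ⟨fun t ht => hkg.le_of_mem t (mem_of_mem_erase ht),
          fun i _ t ht => hxR i t (mem_of_mem_erase ht)⟩
    obtain ⟨B, hB⟩ := ih (R.erase g) (erase_ssubset hkg.mem)
      (fun t ht => hchore t (mem_of_mem_erase ht)) _ _ hx' hxR'
    exact ⟨_, hB.pick hw hx hxR hkg⟩

end PickingSequence

theorem wef1_exists_no_chores_general
    {n : ℕ} {ι : Type*} [Fintype ι] [DecidableEq ι]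
    (v : Fin n → ι → ℝ) (w : Fin n → ℝ) (hw : ∀ i, 0 < w i)
    (hnochore : ∀ j : ι, ∃ i, 0 ≤ v i j) :
    ∃ A : Fin n → Finset ι,
      (∀ j : ι, ∃! i, j ∈ A i) ∧
      ∀ i j, i ≠ j → ¬ WEF1Envies (v i) (w i) (w j) (A i) (A j) := by
  obtain ⟨A, hA⟩ := exists_isWEF1Completion hw univ (fun t _ => hnochore t) 0
    (fun i => ∑ t, |v i t|) (fun i => sum_nonneg fun t _ => abs_nonneg _)
    (fun i t _ => (le_abs_self _).trans
      (single_le_sum (fun t _ => abs_nonneg (v i t)) (mem_univ t)))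
  refine ⟨A, fun t => hA.existsUnique_mem t (mem_univ t), fun i j hij => ?_⟩
  refine not_wef1Envies_of_le (hw i) (hw j) (sum_nonneg (hA.nonneg i)) ?_
  simpa using hA.envy_erase_le i j hij rfl

/-- Every fair division instance with additive valuations, positive
entitlements, and no chores (every item has nonnegative value to some agent)
admits a WEF1 allocation. -/
theorem wef1_exists_no_chores
    {n : ℕ} {ι : Type*} [Fintype ι] [DecidableEq ι] (hn : 0 < n)
    (v : Fin n → ι → ℝ) (w : Fin n → ℝ) (hw : ∀ i, 0 < w i)
    (hnochore : ∀ j : ι, ∃ i, 0 ≤ v i j) :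
    ∃ A : Fin n → Finset ι,
      (∀ j : ι, ∃! i, j ∈ A i) ∧
      ∀ i j, i ≠ j → ¬ WEF1Envies (v i) (w i) (w j) (A i) (A j) :=
  wef1_exists_no_chores_general v w hw hnochore
end

section
/- Fix ε with 0 < ε < 1. Consider two agents with entitlements w = (2, 3) and three items: a chore c and two goods g_1, g_2, with valuations v_1(c) = −(1−ε), v_2(c) = −(1+ε), and v_1(g_1) = v_1(g_2) = v_2(g_1) = v_2(g_2) = 1. Then every allocation of the three items in which agent 2 receives the chore c fails to be WEF1. (Hence a WEF1 allocation of the chores alone—giving c to agent 2 is WEF1 for the chores-only sub-instance—cannot always be extended to a WEF1 allocation of the mixed instance.) -/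
/-!
There are only four allocations giving the chore to the second agent. If that agent takes
everything, the first agent envies it even after one good is removed, since the chore and one
good are still worth `ε > 0` to the first agent. Otherwise the chore holder owns the chore and
at most one good, worth at most `-ε` to it, and it envies the other agent's goods even after
removing one of them or its own chore.
-/

open Finset

theorem Finset.eq_compl_of_existsUnique_mem {ι : Type*} [Fintype ι] [DecidableEq ι]
    {A : Fin 2 → Finset ι} (hA : ∀ j, ∃! i, j ∈ A i) : A 0 = (A 1)ᶜ := by
  ext j
  obtain ⟨i, hi, hu⟩ := hA j
  rw [mem_compl]
  fin_cases i
  · exact ⟨fun _ h1 => absurd (hu 1 h1) (by decide), fun _ => hi⟩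
  · exact ⟨fun h0 => absurd (hu 0 h0) (by decide), fun h1 => absurd hi h1⟩

theorem fin_three_allocations_of_zero_mem_one {A : Fin 2 → Finset (Fin 3)}
    (hA : ∀ j, ∃! i, j ∈ A i) (h0 : 0 ∈ A 1) :
    (A 0 = ∅ ∧ A 1 = {0, 1, 2}) ∨ (A 0 = {2} ∧ A 1 = {0, 1}) ∨
      (A 0 = {1} ∧ A 1 = {0, 2}) ∨ (A 0 = {1, 2} ∧ A 1 = {0}) := by
  rw [Finset.eq_compl_of_existsUnique_mem hA]
  revert h0
  generalize A 1 = S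
  decide +revert

theorem chore_allocation_not_extendable_general
    (ε : ℝ) (hε0 : 0 < ε) :
    let v : Fin 2 → Fin 3 → ℝ := fun i j =>
      if j = 0 then (if i = 0 then -(1 - ε) else -(1 + ε)) else 1
    let w : Fin 2 → ℝ := ![2, 3]
    ∀ A : Fin 2 → Finset (Fin 3),
      (∀ j : Fin 3, ∃! i, j ∈ A i) →
      (0 : Fin 3) ∈ A 1 →
      ∃ i j : Fin 2, i ≠ j ∧ WEF1Envies (v i) (w i) (w j) (A i) (A j) := by
  intro v w A hA hchore
  rcases fin_three_allocations_of_zero_mem_one hA hchore with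
    ⟨hA0, hA1⟩ | ⟨hA0, hA1⟩ | ⟨hA0, hA1⟩ | ⟨hA0, hA1⟩
  · refine ⟨0, 1, by decide, ?_⟩
    simp [WEF1Envies, bundleVal, hA0, hA1, v, w]
    and_intros <;> linarith
  all_goals
    refine ⟨1, 0, by decide, ?_⟩
    simp [WEF1Envies, bundleVal, hA0, hA1, v, w]
    and_intros <;> linarith

/-- Two agents with entitlements (2,3); items: chore `c = 0` and goods
`g₁ = 1`, `g₂ = 2`. Any allocation giving the chore to agent 2 (index 1)
fails to be WEF1. -/
theorem chore_allocation_not_extendable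
    (ε : ℝ) (hε0 : 0 < ε) (hε1 : ε < 1) :
    let v : Fin 2 → Fin 3 → ℝ := fun i j =>
      if j = 0 then (if i = 0 then -(1 - ε) else -(1 + ε)) else 1
    let w : Fin 2 → ℝ := ![2, 3]
    ∀ A : Fin 2 → Finset (Fin 3),
      (∀ j : Fin 3, ∃! i, j ∈ A i) →
      (0 : Fin 3) ∈ A 1 →
      ∃ i j : Fin 2, i ≠ j ∧ WEF1Envies (v i) (w i) (w j) (A i) (A j) :=
  chore_allocation_not_extendable_general ε hε0
end

section
/- Let (A, p) be an integral market equilibrium for a fair division instance with additive valuations and positive entitlements. If agent i WEF1-envies agent j in the allocation A, then agent i pWEF1-envies agent j in (A, p). -/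
/-!
In a market equilibrium agent `i` values every item at most `α * p` and her own items exactly
`α * p`, for some `α > 0`. Each envy inequality compares `v i` on (a subset of) `A i` with `v i`
on (a subset of) `A j`; replacing `v i` by `α * p` keeps the left side and can only raise the
right side, and dividing by `α` gives the price version.
-/

open Finset

/-- `(A, p)` is an integral market equilibrium. -/
def IntMarketEq {n : ℕ} {ι : Type*}
    (v : Fin n → ι → ℝ) (A : Fin n → Finset ι) (p : ι → ℝ) : Prop :=
  (∀ j : ι, (∃ i, 0 < v i j) → 0 < p j) ∧
  (∀ j : ι, (∀ i, v i j < 0) → p j < 0) ∧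
  (∀ j : ι, ((∀ i, v i j ≤ 0) ∧ (∃ i, v i j = 0)) → p j = 0) ∧
  (∀ i, ∃ α : ℝ, 0 < α ∧ (∀ j : ι, v i j ≤ α * p j) ∧ (∀ j ∈ A i, v i j = α * p j))

section

variable {ι : Type*}

theorem bundleVal_le_mul_of_le {v p : ι → ℝ} {α : ℝ} {S : Finset ι}
    (hle : ∀ t ∈ S, v t ≤ α * p t) : bundleVal v S ≤ α * bundleVal p S := by
  rw [bundleVal, bundleVal, mul_sum]
  exact sum_le_sum hle

theorem bundleVal_eq_mul_of_eq {v p : ι → ℝ} {α : ℝ} {S : Finset ι}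
    (heq : ∀ t ∈ S, v t = α * p t) : bundleVal v S = α * bundleVal p S := by
  rw [bundleVal, bundleVal, mul_sum]
  exact sum_congr rfl heq

theorem bundleVal_div_lt_of_le_mul {v p : ι → ℝ} {α wi wj : ℝ} {S T : Finset ι}
    (hα : 0 < α) (hwj : 0 ≤ wj) (heq : ∀ t ∈ S, v t = α * p t)
    (hle : ∀ t ∈ T, v t ≤ α * p t) (h : bundleVal v S / wi < bundleVal v T / wj) :
    bundleVal p S / wi < bundleVal p T / wj := by
  refine lt_of_mul_lt_mul_left ?_ hα.le
  calc α * (bundleVal p S / wi) = bundleVal v S / wi := by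
        rw [bundleVal_eq_mul_of_eq heq, mul_div_assoc]
    _ < bundleVal v T / wj := h
    _ ≤ α * bundleVal p T / wj := div_le_div_of_nonneg_right (bundleVal_le_mul_of_le hle) hwj
    _ = α * (bundleVal p T / wj) := mul_div_assoc _ _ _

theorem WEF1Envies.of_le_mul [DecidableEq ι] {v p : ι → ℝ} {α wi wj : ℝ} {Ai Aj : Finset ι}
    (hα : 0 < α) (hwj : 0 ≤ wj) (heq : ∀ t ∈ Ai, v t = α * p t)
    (hle : ∀ t ∈ Aj, v t ≤ α * p t) (henvy : WEF1Envies v wi wj Ai Aj) :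
    WEF1Envies p wi wj Ai Aj := by
  obtain ⟨hbundle, hgood, hchore⟩ := henvy
  have heq_erase (c : ι) : ∀ t ∈ Ai.erase c, v t = α * p t :=
    fun t ht => heq t (mem_of_mem_erase ht)
  have hle_erase (g : ι) : ∀ t ∈ Aj.erase g, v t ≤ α * p t :=
    fun t ht => hle t (mem_of_mem_erase ht)
  exact ⟨bundleVal_div_lt_of_le_mul hα hwj heq hle hbundle,
    fun g hg => bundleVal_div_lt_of_le_mul hα hwj heq (hle_erase g) (hgood g hg),
    fun c hc => bundleVal_div_lt_of_le_mul hα hwj (heq_erase c) hle (hchore c hc)⟩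

end

theorem wef1_envy_implies_pwef1_envy_general
    {n : ℕ} {ι : Type*} [DecidableEq ι]
    (v : Fin n → ι → ℝ) (A : Fin n → Finset ι) (p : ι → ℝ)
    (w : Fin n → ℝ) (hw : ∀ i, 0 < w i)
    (hme : IntMarketEq v A p)
    (i j : Fin n)
    (henvy : WEF1Envies (v i) (w i) (w j) (A i) (A j)) :
    WEF1Envies p (w i) (w j) (A i) (A j) := by
  obtain ⟨α, hα, hle, heq⟩ := hme.2.2.2 i
  exact henvy.of_le_mul hα (hw j).le heq fun t _ => hle t

/-- In an integral market equilibrium, WEF1-envy implies pWEF1-envy. -/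
theorem wef1_envy_implies_pwef1_envy
    {n : ℕ} {ι : Type*} [Fintype ι] [DecidableEq ι]
    (v : Fin n → ι → ℝ) (A : Fin n → Finset ι) (p : ι → ℝ)
    (w : Fin n → ℝ) (hw : ∀ i, 0 < w i)
    (hpart : ∀ j : ι, ∃! i, j ∈ A i)
    (hme : IntMarketEq v A p)
    (i j : Fin n)
    (henvy : WEF1Envies (v i) (w i) (w j) (A i) (A j)) :
    WEF1Envies p (w i) (w j) (A i) (A j) :=
  wef1_envy_implies_pwef1_envy_general v A p w hw hme i j henvy
end

section
/- Let (A, p) be an integral market equilibrium for a fair division instance with additive valuations and positive entitlements. If (A, p) is pWEF1 (no agent pWEF1-envies another), then the allocation A is WEF1 and fractionally Pareto-optimal. -/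
open Finset

/-- `x` is a fractional allocation. -/
def FracAlloc {n : ℕ} {ι : Type*} [Fintype ι] (x : Fin n → ι → ℝ) : Prop :=
  (∀ i j, 0 ≤ x i j) ∧ (∀ j : ι, ∑ i, x i j = 1)

/-- Agent's value for a fractional bundle. -/
noncomputable def fracVal {ι : Type*} [Fintype ι] (v : ι → ℝ) (z : ι → ℝ) : ℝ :=
  ∑ j, v j * z j

/-!
At an equilibrium every agent `i` values each item at most `αᵢ` times its price, with equality on
her own bundle. Hence `vᵢ(S) = αᵢ p(S)` for `S ⊆ Aᵢ` and `vᵢ(T) ≤ αᵢ p(T)` for every `T`, so each of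
the three strict inequalities witnessing WEF1-envy of `i` towards `j` transfers to prices, giving
pWEF1-envy. For fPO, a fractional allocation Pareto-dominating `A` would in the same way
weakly increase every agent's spending, strictly for one agent, while total spending is `p(M)` in
both allocations.
-/

section ScaledBounds

variable {ι : Type*} {f g : ι → ℝ} {a : ℝ}

lemma bundleVal_le_mul_of_le_s8 (h : ∀ t, f t ≤ a * g t) (S : Finset ι) :
    bundleVal f S ≤ a * bundleVal g S := by
  simp only [bundleVal, mul_sum]
  exact sum_le_sum fun t _ => h t

lemma bundleVal_eq_mul_of_eqOn {S : Finset ι} (h : ∀ t ∈ S, f t = a * g t) :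
    bundleVal f S = a * bundleVal g S := by
  simp only [bundleVal, mul_sum]
  exact sum_congr rfl h

lemma fracVal_le_mul_of_le [Fintype ι] {z : ι → ℝ} (hz : ∀ t, 0 ≤ z t)
    (h : ∀ t, f t ≤ a * g t) : fracVal f z ≤ a * fracVal g z := by
  simp only [fracVal, mul_sum, ← mul_assoc]
  exact sum_le_sum fun t _ => mul_le_mul_of_nonneg_right (h t) (hz t)

end ScaledBounds

lemma div_lt_div_of_eq_mul_of_le_mul {a wi wj x y x' y' : ℝ} (ha : 0 < a) (hwi : 0 < wi)
    (hwj : 0 < wj) (hx : x = a * x') (hy : y ≤ a * y') (h : x / wi < y / wj) :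
    x' / wi < y' / wj := by
  rw [div_lt_div_iff₀ hwi hwj] at h ⊢
  nlinarith [mul_le_mul_of_nonneg_right hy hwi.le]

lemma WEF1Envies.of_le_mul_price {ι : Type*} [DecidableEq ι] {v p : ι → ℝ} {α wi wj : ℝ}
    {Ai Aj : Finset ι} (hα : 0 < α) (hwi : 0 < wi) (hwj : 0 < wj)
    (hle : ∀ t, v t ≤ α * p t) (heq : ∀ t ∈ Ai, v t = α * p t)
    (h : WEF1Envies v wi wj Ai Aj) : WEF1Envies p wi wj Ai Aj := by
  obtain ⟨henvy, hgood, hchore⟩ := h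
  have hsub : ∀ S ⊆ Ai, bundleVal v S = α * bundleVal p S := fun S hS =>
    bundleVal_eq_mul_of_eqOn fun t ht => heq t (hS ht)
  have transfer : ∀ S ⊆ Ai, ∀ T, bundleVal v S / wi < bundleVal v T / wj →
      bundleVal p S / wi < bundleVal p T / wj := fun S hS T =>
    div_lt_div_of_eq_mul_of_le_mul hα hwi hwj (hsub S hS) (bundleVal_le_mul_of_le_s8 hle T)
  exact ⟨transfer _ subset_rfl _ henvy, fun g hg => transfer _ subset_rfl _ (hgood g hg),
    fun c hc => transfer _ (erase_subset c Ai) _ (hchore c hc)⟩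

section Spending

variable {ι : Type*} [Fintype ι] {v p z : ι → ℝ} {α : ℝ} {S : Finset ι}

lemma bundleVal_le_fracVal_of_le_mul_price (hα : 0 < α) (hz : ∀ t, 0 ≤ z t)
    (hle : ∀ t, v t ≤ α * p t) (heq : ∀ t ∈ S, v t = α * p t)
    (h : bundleVal v S ≤ fracVal v z) : bundleVal p S ≤ fracVal p z := by
  refine le_of_mul_le_mul_left ?_ hα
  calc α * bundleVal p S = bundleVal v S := (bundleVal_eq_mul_of_eqOn heq).symm
    _ ≤ fracVal v z := h
    _ ≤ α * fracVal p z := fracVal_le_mul_of_le hz hle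

lemma bundleVal_lt_fracVal_of_le_mul_price (hα : 0 < α) (hz : ∀ t, 0 ≤ z t)
    (hle : ∀ t, v t ≤ α * p t) (heq : ∀ t ∈ S, v t = α * p t)
    (h : bundleVal v S < fracVal v z) : bundleVal p S < fracVal p z := by
  refine lt_of_mul_lt_mul_left ?_ hα.le
  calc α * bundleVal p S = bundleVal v S := (bundleVal_eq_mul_of_eqOn heq).symm
    _ < fracVal v z := h
    _ ≤ α * fracVal p z := fracVal_le_mul_of_le hz hle

end Spending

lemma sum_bundleVal_of_existsUnique_mem {κ ι : Type*} [Fintype κ] [Fintype ι] [DecidableEq ι]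
    {A : κ → Finset ι} (hpart : ∀ t, ∃! i, t ∈ A i) (p : ι → ℝ) :
    ∑ i, bundleVal p (A i) = ∑ t, p t := by
  simp only [bundleVal, fun i => (sum_ite_mem_eq (A i) p).symm]
  rw [sum_comm]
  refine sum_congr rfl fun t _ => ?_
  obtain ⟨i, hi, huniq⟩ := hpart t
  rw [Fintype.sum_eq_single i fun k hk => if_neg fun h => hk (huniq k h), if_pos hi]

lemma sum_fracVal_of_fracAlloc {n : ℕ} {ι : Type*} [Fintype ι] {y : Fin n → ι → ℝ}
    (hy : FracAlloc y) (p : ι → ℝ) : ∑ i, fracVal p (y i) = ∑ t, p t := by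
  simp only [fracVal]
  rw [sum_comm]
  exact sum_congr rfl fun t _ => by rw [← mul_sum, hy.2 t, mul_one]

/-- If an integral market equilibrium `(A, p)` is pWEF1, then `A` is WEF1 and
fractionally Pareto-optimal. -/
theorem pwef1_implies_wef1_fPO
    {n : ℕ} {ι : Type*} [Fintype ι] [DecidableEq ι]
    (v : Fin n → ι → ℝ) (A : Fin n → Finset ι) (p : ι → ℝ)
    (w : Fin n → ℝ) (hw : ∀ i, 0 < w i)
    (hpart : ∀ j : ι, ∃! i, j ∈ A i)
    (hme : IntMarketEq v A p)
    (hpwef1 : ∀ i j, i ≠ j → ¬ WEF1Envies p (w i) (w j) (A i) (A j)) :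
    (∀ i j, i ≠ j → ¬ WEF1Envies (v i) (w i) (w j) (A i) (A j)) ∧
    ¬ ∃ y : Fin n → ι → ℝ, FracAlloc y ∧
        (∀ i, bundleVal (v i) (A i) ≤ fracVal (v i) (y i)) ∧
        (∃ i, bundleVal (v i) (A i) < fracVal (v i) (y i)) := by
  choose α hα hle heq using hme.2.2.2
  refine ⟨fun i j hij h => hpwef1 i j hij
    (h.of_le_mul_price (hα i) (hw i) (hw j) (hle i) (heq i)), ?_⟩
  rintro ⟨y, hy, hdom, i₀, hi₀⟩
  have hspend_le : ∀ i, bundleVal p (A i) ≤ fracVal p (y i) := fun i =>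
    bundleVal_le_fracVal_of_le_mul_price (hα i) (hy.1 i) (hle i) (heq i) (hdom i)
  have hspend_lt : bundleVal p (A i₀) < fracVal p (y i₀) :=
    bundleVal_lt_fracVal_of_le_mul_price (hα i₀) (hy.1 i₀) (hle i₀) (heq i₀) hi₀
  have htotal := sum_lt_sum (fun i _ => hspend_le i) ⟨i₀, mem_univ i₀, hspend_lt⟩
  rw [sum_bundleVal_of_existsUnique_mem hpart, sum_fracVal_of_fracAlloc hy] at htotal
  exact htotal.false
end

section
/- Let ([n], [m], (v_i), w) be a fair division instance with additive valuations. Let A be a social-welfare-maximizing allocation, i.e., each item j is allocated to some agent in argmax_{i∈[n]} v_i(j), and define prices p by p_j := v_i(j) where i is the agent receiving j. Then (A, p) is a market equilibrium. -/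
open Finset

section MaxPrice

variable {κ : Type*} {u : κ → ℝ} {x : ℝ}

theorem IsGreatest.range_pos_of_exists_pos (hx : IsGreatest (Set.range u) x)
    (h : ∃ i, 0 < u i) : 0 < x :=
  let ⟨i, hi⟩ := h
  hi.trans_le (hx.2 ⟨i, rfl⟩)

theorem IsGreatest.range_neg_of_forall_neg (hx : IsGreatest (Set.range u) x)
    (h : ∀ i, u i < 0) : x < 0 :=
  let ⟨i, hi⟩ := hx.1
  hi ▸ h i

theorem IsGreatest.range_eq_zero (hx : IsGreatest (Set.range u) x)
    (h : ∀ i, u i ≤ 0) (h₀ : ∃ i, u i = 0) : x = 0 :=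
  let ⟨i, hi⟩ := h₀
  le_antisymm (hx.1.elim fun k hk => hk ▸ h k) (hi ▸ hx.2 ⟨i, rfl⟩)

end MaxPrice

-- Every agent can take `α = 1`.
theorem intMarketEq_of_isGreatest {n : ℕ} {ι : Type*} {v : Fin n → ι → ℝ}
    {A : Fin n → Finset ι} {p : ι → ℝ} (hp : ∀ j, IsGreatest (Set.range fun i => v i j) (p j))
    (hA : ∀ i, ∀ j ∈ A i, v i j = p j) : IntMarketEq v A p := by
  refine ⟨fun j => (hp j).range_pos_of_exists_pos, fun j => (hp j).range_neg_of_forall_neg,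
    fun j h => (hp j).range_eq_zero h.1 h.2, fun i => ⟨1, one_pos, fun j => ?_, fun j hj => ?_⟩⟩
  · simpa using (hp j).2 ⟨i, rfl⟩
  · simpa using hA i j hj

/-- A social-welfare-maximizing allocation (each item goes to an agent valuing
it the most), priced at the receiving agent's value, is a market equilibrium. -/
theorem socialWelfareMax_marketEq
    {n : ℕ} {ι : Type*} [Fintype ι]
    (v : Fin n → ι → ℝ) (f : ι → Fin n)
    (hf : ∀ (j : ι) (i : Fin n), v i j ≤ v (f j) j) :
    IntMarketEq v (fun i => Finset.univ.filter (fun j => f j = i))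
      (fun j => v (f j) j) := by
  refine intMarketEq_of_isGreatest (fun j => ⟨⟨f j, rfl⟩, ?_⟩) fun i j hj => ?_
  · rintro _ ⟨i, rfl⟩
    exact hf j i
  · rw [(mem_filter.mp hj).2]
end

section
/- Let (A, p) be an integral market equilibrium for a fair division instance with two agents, additive valuations, and positive entitlements w_1, w_2. Suppose p(A_1)/w_1 ≤ p(A_2)/w_2. Then agent 2 does not WEF1-envy agent 1 in A; consequently, if A is not WEF1, then agent 1 WEF1-envies agent 2. -/
/-!
Agent 2 spends only on maximum bang-per-buck items: with `α > 0` its bang-per-buck ratio,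
`v₂(A₂) = α·p(A₂)` while `v₂(A₁) ≤ α·p(A₁)`. Dividing by the entitlements, the budget hypothesis
gives `v₂(A₁)/w₁ ≤ v₂(A₂)/w₂`, so agent 2 does not even envy agent 1. In a two-agent instance
the only other possible WEF1-envy is that of agent 1 towards agent 2.
-/

open Finset

lemma bundleVal_le_mul_bundleVal {ι : Type*} {v p : ι → ℝ} {S : Finset ι} {α : ℝ}
    (h : ∀ j ∈ S, v j ≤ α * p j) : bundleVal v S ≤ α * bundleVal p S := by
  unfold bundleVal
  rw [mul_sum]
  exact sum_le_sum h

lemma bundleVal_eq_mul_bundleVal {ι : Type*} {v p : ι → ℝ} {S : Finset ι} {α : ℝ}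
    (h : ∀ j ∈ S, v j = α * p j) : bundleVal v S = α * bundleVal p S := by
  unfold bundleVal
  rw [mul_sum]
  exact sum_congr rfl h

lemma not_WEF1Envies_of_div_le {ι : Type*} [DecidableEq ι] {v : ι → ℝ} {wi wj : ℝ}
    {Ai Aj : Finset ι} (h : bundleVal v Aj / wj ≤ bundleVal v Ai / wi) :
    ¬ WEF1Envies v wi wj Ai Aj :=
  fun henvy => h.not_gt henvy.1

lemma IntMarketEq.bundleVal_div_le_of_budget_le {n : ℕ} {ι : Type*}
    {v : Fin n → ι → ℝ} {A : Fin n → Finset ι} {p : ι → ℝ} (hme : IntMarketEq v A p)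
    {i k : Fin n} {wi wk : ℝ} (hwk : 0 ≤ wk)
    (hbudget : bundleVal p (A k) / wk ≤ bundleVal p (A i) / wi) :
    bundleVal (v i) (A k) / wk ≤ bundleVal (v i) (A i) / wi := by
  obtain ⟨α, hα, hle, heq⟩ := hme.2.2.2 i
  calc bundleVal (v i) (A k) / wk
      ≤ α * bundleVal p (A k) / wk :=
        div_le_div_of_nonneg_right (bundleVal_le_mul_bundleVal fun j _ => hle j) hwk
    _ = α * (bundleVal p (A k) / wk) := mul_div_assoc _ _ _
    _ ≤ α * (bundleVal p (A i) / wi) := mul_le_mul_of_nonneg_left hbudget hα.le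
    _ = bundleVal (v i) (A i) / wi := by rw [bundleVal_eq_mul_bundleVal heq, mul_div_assoc]

theorem richer_agent_no_envy_general
    {ι : Type*} [DecidableEq ι]
    (v : Fin 2 → ι → ℝ) (A : Fin 2 → Finset ι) (p : ι → ℝ)
    (w : Fin 2 → ℝ) (hw : ∀ i, 0 < w i)
    (hme : IntMarketEq v A p)
    (hbudget : bundleVal p (A 0) / w 0 ≤ bundleVal p (A 1) / w 1) :
    ¬ WEF1Envies (v 1) (w 1) (w 0) (A 1) (A 0) ∧
    (¬ (∀ i j, i ≠ j → ¬ WEF1Envies (v i) (w i) (w j) (A i) (A j)) →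
      WEF1Envies (v 0) (w 0) (w 1) (A 0) (A 1)) := by
  have hnoenvy : ¬ WEF1Envies (v 1) (w 1) (w 0) (A 1) (A 0) :=
    not_WEF1Envies_of_div_le (hme.bundleVal_div_le_of_budget_le (hw 0).le hbudget)
  refine ⟨hnoenvy, fun hnotWEF1 => ?_⟩
  push Not at hnotWEF1
  obtain ⟨i, j, hij, henvy⟩ := hnotWEF1
  fin_cases i <;> fin_cases j
  · exact absurd rfl hij
  · exact henvy
  · exact absurd henvy hnoenvy
  · exact absurd rfl hij

/-- In a two-agent integral market equilibrium, if agent 1's budget-per-weight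
is at most agent 2's, then agent 2 does not WEF1-envy agent 1; hence if the
allocation is not WEF1, agent 1 WEF1-envies agent 2. -/
theorem richer_agent_no_envy
    {ι : Type*} [Fintype ι] [DecidableEq ι]
    (v : Fin 2 → ι → ℝ) (A : Fin 2 → Finset ι) (p : ι → ℝ)
    (w : Fin 2 → ℝ) (hw : ∀ i, 0 < w i)
    (hpart : ∀ j : ι, ∃! i, j ∈ A i)
    (hme : IntMarketEq v A p)
    (hbudget : bundleVal p (A 0) / w 0 ≤ bundleVal p (A 1) / w 1) :
    ¬ WEF1Envies (v 1) (w 1) (w 0) (A 1) (A 0) ∧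
    (¬ (∀ i j, i ≠ j → ¬ WEF1Envies (v i) (w i) (w j) (A i) (A j)) →
      WEF1Envies (v 0) (w 0) (w 1) (A 0) (A 1)) :=
  richer_agent_no_envy_general v A p w hw hme hbudget
end

section
/- Consider a fair division instance with two agents ℓ and b, additive valuations, and positive entitlements. Let (A, p) be an integral market equilibrium with best-bang-per-buck values α_ℓ, α_b > 0 (i.e., v_i(j) ≤ α_i·p_j for every item j, with equality for j ∈ A_i, for i ∈ {ℓ, b}). Suppose agent ℓ WEF1-envies agent b in A, and both A_ℓ and A_b contain at least one item that is a good or a chore. Let G be the set of goods and C the set of chores, and define β := max_{g ∈ A_b ∩ G} v_ℓ(g)/(α_ℓ·p_g) and γ := max_{c ∈ A_ℓ ∩ C} (α_b·p_c)/v_b(c), where the maximum over an empty set is −∞. Then ρ := max(β, γ) satisfies 0 < ρ ≤ 1, and (A, p̂) is a market equilibrium, where p̂_j := p_j/ρ for j ∈ A_ℓ and p̂_j := p_j for j ∈ A_b (with best-bang-per-buck values α_ℓ·ρ for ℓ and α_b for b). -/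
open Finset

/-- Item `j` is a good: some agent values it positively. -/
def IsGood {n : ℕ} {ι : Type*} (v : Fin n → ι → ℝ) (j : ι) : Prop := ∃ i, 0 < v i j

/-- Item `j` is a chore: every agent values it negatively. -/
def IsChore {n : ℕ} {ι : Type*} (v : Fin n → ι → ℝ) (j : ι) : Prop := ∀ i, v i j < 0

/-- Item `j` is neutral. -/
def IsNeutral {n : ℕ} {ι : Type*} (v : Fin n → ι → ℝ) (j : ι) : Prop :=
  (∀ i, v i j ≤ 0) ∧ (∃ i, v i j = 0)


/-! Envy of `ℓ` forces either a good in `A b` that `ℓ` values positively or a chore in `A ℓ`,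
since otherwise `ℓ` would value her own bundle at least `0` and `b`'s bundle at most `0`.
So one of the ratios defining `ρ` is positive, and best-bang-per-buck makes all of them at
most `1`. Dividing the prices of `A ℓ` by `ρ` keeps every sign; agent `ℓ` stays
best-bang-per-buck at rate `αℓ ρ` because `ρ ≥ β`, and agent `b` at rate `αb` because
`ρ ≥ γ`. -/

section Market

variable {n : ℕ} {ι : Type*} {v : Fin n → ι → ℝ} {p : ι → ℝ}

lemma isGood_or_isChore_or_isNeutral (v : Fin n → ι → ℝ) (j : ι) :
    IsGood v j ∨ IsChore v j ∨ IsNeutral v j := by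
  by_cases hg : IsGood v j
  · exact Or.inl hg
  by_cases hc : IsChore v j
  · exact Or.inr (Or.inl hc)
  simp only [IsGood, not_exists, not_lt] at hg
  simp only [IsChore, not_forall, not_lt] at hc
  obtain ⟨i, hi⟩ := hc
  exact Or.inr (Or.inr ⟨hg, i, le_antisymm (hg i) hi⟩)

/-- Condition (1) of a market equilibrium. -/
def PriceSigns (v : Fin n → ι → ℝ) (p : ι → ℝ) : Prop :=
  (∀ j, IsGood v j → 0 < p j) ∧ (∀ j, IsChore v j → p j < 0) ∧ (∀ j, IsNeutral v j → p j = 0)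

namespace PriceSigns

lemma nonneg_of_not_isChore (hp : PriceSigns v p) {j : ι} (hj : ¬IsChore v j) : 0 ≤ p j := by
  rcases isGood_or_isChore_or_isNeutral v j with hg | hc | hn
  · exact (hp.1 j hg).le
  · exact absurd hc hj
  · exact (hp.2.2 j hn).ge

lemma isGood_of_pos (hp : PriceSigns v p) {j : ι} (hj : 0 < p j) : IsGood v j := by
  rcases isGood_or_isChore_or_isNeutral v j with hg | hc | hn
  · exact hg
  · exact absurd (hp.2.1 j hc) hj.not_gt
  · exact absurd (hp.2.2 j hn) hj.ne'

lemma isChore_of_neg (hp : PriceSigns v p) {j : ι} (hj : p j < 0) : IsChore v j := by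
  by_contra hc
  exact hj.not_ge (hp.nonneg_of_not_isChore hc)

end PriceSigns

lemma exists_pos_or_isChore_of_div_lt (hp : PriceSigns v p) {i : Fin n} {α wS wT : ℝ}
    {S T : Finset ι} (hα : 0 ≤ α) (hwS : 0 ≤ wS) (hwT : 0 ≤ wT) (hS : ∀ j ∈ S, v i j = α * p j)
    (hlt : bundleVal (v i) S / wS < bundleVal (v i) T / wT) :
    (∃ g ∈ T, 0 < v i g) ∨ ∃ c ∈ S, IsChore v c := by
  by_contra! ⟨hT, hS'⟩
  have hSval : 0 ≤ bundleVal (v i) S := sum_nonneg fun j hj => by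
    rw [hS j hj]
    exact mul_nonneg hα (hp.nonneg_of_not_isChore (hS' j hj))
  have hTval : bundleVal (v i) T ≤ 0 := sum_nonpos hT
  exact hlt.not_ge ((div_nonpos_of_nonpos_of_nonneg hTval hwT).trans (div_nonneg hSval hwS))

/-- Condition (2) of a market equilibrium, for one agent. -/
def IsBBB (u : ι → ℝ) (α : ℝ) (p : ι → ℝ) (S : Finset ι) : Prop :=
  (∀ j, u j ≤ α * p j) ∧ ∀ j ∈ S, u j = α * p j

variable [DecidableEq ι] {u : ι → ℝ} {α ρ : ℝ} {S T : Finset ι}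

noncomputable def divideOn (S : Finset ι) (ρ : ℝ) (p : ι → ℝ) : ι → ℝ :=
  fun j => if j ∈ S then p j / ρ else p j

lemma PriceSigns.divideOn (hp : PriceSigns v p) (S : Finset ι)
    (hρ : 0 < ρ) : PriceSigns v (divideOn S ρ p) := by
  refine ⟨fun j hj => ?_, fun j hj => ?_, fun j hj => ?_⟩ <;>
    unfold _root_.divideOn <;> split_ifs
  · exact div_pos (hp.1 j hj) hρ
  · exact hp.1 j hj
  · exact div_neg_of_neg_of_pos (hp.2.1 j hj) hρ
  · exact hp.2.1 j hj
  · rw [hp.2.2 j hj, zero_div]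
  · exact hp.2.2 j hj

lemma IsBBB.divideOn_self (h : IsBBB u α p S) (hα : 0 ≤ α) (hρ0 : 0 < ρ) (hρ1 : ρ ≤ 1)
    (hout : ∀ j ∉ S, 0 < p j → u j ≤ ρ * (α * p j)) :
    IsBBB u (α * ρ) (divideOn S ρ p) S := by
  have hcancel : ∀ j, α * ρ * (p j / ρ) = α * p j := fun j => by field_simp
  refine ⟨fun j => ?_, fun j hj => ?_⟩
  · unfold divideOn
    split_ifs with hj
    · rw [hcancel]
      exact h.1 j
    · rcases lt_or_ge 0 (p j) with hpj | hpj
      · linarith [hout j hj hpj]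
      · nlinarith [h.1 j, mul_nonpos_of_nonneg_of_nonpos hα hpj]
  · rw [divideOn, if_pos hj, hcancel]
    exact h.2 j hj

lemma IsBBB.divideOn_of_disjoint (h : IsBBB u α p T) (hST : Disjoint S T) (hα : 0 ≤ α)
    (hρ0 : 0 < ρ) (hρ1 : ρ ≤ 1) (hin : ∀ j ∈ S, p j < 0 → ρ * u j ≤ α * p j) :
    IsBBB u α (divideOn S ρ p) T := by
  refine ⟨fun j => ?_, fun j hj => ?_⟩
  · unfold divideOn
    split_ifs with hj
    · rw [← mul_div_assoc, le_div_iff₀ hρ0, mul_comm]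
      rcases lt_or_ge (p j) 0 with hpj | hpj
      · exact hin j hj hpj
      · nlinarith [h.1 j, mul_nonneg hα hpj]
    · exact h.1 j
  · rw [divideOn, if_neg (disjoint_right.mp hST hj)]
    exact h.2 j hj

end Market

lemma mem_of_notMem_of_existsUnique {ι : Type*} {A : Fin 2 → Finset ι}
    (hpart : ∀ j, ∃! i, j ∈ A i) {ℓ b : Fin 2} (hlb : ℓ ≠ b) {j : ι} (hj : j ∉ A ℓ) : j ∈ A b := by
  obtain ⟨i, hi, -⟩ := hpart j
  obtain rfl : i = b := by
    have hiℓ : i ≠ ℓ := by rintro rfl; exact hj hi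
    omega
  exact hi

lemma Finset.le_of_max_image_le {κ α : Type*} [LinearOrder α] {s : Finset κ} {f : κ → α}
    {r : α} (h : (s.image f).max ≤ r) {x : κ} (hx : x ∈ s) : f x ≤ r :=
  WithBot.coe_le_coe.mp ((le_max (mem_image_of_mem f hx)).trans h)

lemma exists_max_image_max_eq_coe {κ : Type*} {s t : Finset κ} {f g : κ → ℝ}
    (hpos : (∃ x ∈ s, 0 < f x) ∨ ∃ x ∈ t, 0 < g x)
    (hf : ∀ x ∈ s, f x ≤ 1) (hg : ∀ x ∈ t, g x ≤ 1) :
    ∃ ρ : ℝ, max (s.image f).max (t.image g).max = ρ ∧ 0 < ρ ∧ ρ ≤ 1 := by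
  have hpos' : ∃ y ∈ s.image f ∪ t.image g, 0 < y := by
    rcases hpos with ⟨x, hx, hfx⟩ | ⟨x, hx, hgx⟩
    · exact ⟨f x, mem_union_left _ (mem_image_of_mem f hx), hfx⟩
    · exact ⟨g x, mem_union_right _ (mem_image_of_mem g hx), hgx⟩
  have hle : ∀ y ∈ s.image f ∪ t.image g, y ≤ 1 := by
    simp only [mem_union, mem_image]
    rintro y (⟨x, hx, rfl⟩ | ⟨x, hx, rfl⟩)
    exacts [hf x hx, hg x hx]
  obtain ⟨y, hy, hy0⟩ := hpos'
  obtain ⟨ρ, hρ⟩ := max_of_mem hy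
  refine ⟨ρ, max_union (s := s.image f) ▸ hρ, hy0.trans_le (le_max_of_eq hy hρ),
    hle ρ (mem_of_max hρ)⟩

open Classical in
/-- `Finset.max : Finset ℝ → WithBot ℝ` encodes "max over an empty set is `-∞`". -/
theorem price_raise_preserves_marketEq_general
    {ι : Type*} [DecidableEq ι]
    (v : Fin 2 → ι → ℝ) (A : Fin 2 → Finset ι) (p : ι → ℝ)
    (w : Fin 2 → ℝ) (hw : ∀ i, 0 < w i)
    (ℓ b : Fin 2) (hlb : ℓ ≠ b)
    (hpart : ∀ j : ι, ∃! i, j ∈ A i)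
    -- price sign conditions of the market equilibrium (A, p):
    (hpg : ∀ j : ι, IsGood v j → 0 < p j)
    (hpc : ∀ j : ι, IsChore v j → p j < 0)
    (hpn : ∀ j : ι, IsNeutral v j → p j = 0)
    -- best-bang-per-buck values:
    (αℓ αb : ℝ) (hαℓ : 0 < αℓ) (hαb : 0 < αb)
    (hbbℓ : ∀ j : ι, v ℓ j ≤ αℓ * p j) (hbbℓeq : ∀ j ∈ A ℓ, v ℓ j = αℓ * p j)
    (hbbb : ∀ j : ι, v b j ≤ αb * p j) (hbbbeq : ∀ j ∈ A b, v b j = αb * p j)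
    -- agent ℓ WEF1-envies agent b:
    (henvy : WEF1Envies (v ℓ) (w ℓ) (w b) (A ℓ) (A b)) :
    let β : WithBot ℝ :=
      (((A b).filter (fun g => IsGood v g)).image (fun g => v ℓ g / (αℓ * p g))).max
    let γ : WithBot ℝ :=
      (((A ℓ).filter (fun c => IsChore v c)).image (fun c => αb * p c / v b c)).max
    ∃ ρ : ℝ, max β γ = (ρ : WithBot ℝ) ∧ 0 < ρ ∧ ρ ≤ 1 ∧
      (let phat : ι → ℝ := fun j => if j ∈ A ℓ then p j / ρ else p j
       (∀ j : ι, IsGood v j → 0 < phat j) ∧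
       (∀ j : ι, IsChore v j → phat j < 0) ∧
       (∀ j : ι, IsNeutral v j → phat j = 0) ∧
       (∀ j : ι, v ℓ j ≤ (αℓ * ρ) * phat j) ∧
       (∀ j ∈ A ℓ, v ℓ j = (αℓ * ρ) * phat j) ∧
       (∀ j : ι, v b j ≤ αb * phat j) ∧
       (∀ j ∈ A b, v b j = αb * phat j)) := by
  intro β γ
  have hp : PriceSigns v p := ⟨hpg, hpc, hpn⟩
  have hdisj : Disjoint (A ℓ) (A b) := disjoint_left.mpr fun j hjℓ hjb =>
    hlb ((hpart j).unique hjℓ hjb)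
  obtain ⟨ρ, hρ, hρ0, hρ1⟩ : ∃ ρ : ℝ, max β γ = ρ ∧ 0 < ρ ∧ ρ ≤ 1 := by
    refine exists_max_image_max_eq_coe ?_ ?_ ?_
    · rcases exists_pos_or_isChore_of_div_lt hp hαℓ.le (hw ℓ).le (hw b).le hbbℓeq henvy.1 with
        ⟨g, hg, hvg⟩ | ⟨c, hc, hchore⟩
      · have hgood : IsGood v g := ⟨ℓ, hvg⟩
        exact Or.inl ⟨g, mem_filter.mpr ⟨hg, hgood⟩, div_pos hvg (mul_pos hαℓ (hpg g hgood))⟩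
      · exact Or.inr ⟨c, mem_filter.mpr ⟨hc, hchore⟩,
          div_pos_of_neg_of_neg (mul_neg_of_pos_of_neg hαb (hpc c hchore)) (hchore b)⟩
    · intro g hg
      exact div_le_one_of_le₀ (hbbℓ g) (mul_pos hαℓ (hpg g (mem_filter.mp hg).2)).le
    · intro c hc
      exact (div_le_one_of_neg ((mem_filter.mp hc).2 b)).mpr (hbbb c)
  have hβ : β ≤ ρ := hρ ▸ le_max_left β γ
  have hγ : γ ≤ ρ := hρ ▸ le_max_right β γ
  refine ⟨ρ, hρ, hρ0, hρ1, ?_⟩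
  have hℓ : IsBBB (v ℓ) (αℓ * ρ) (divideOn (A ℓ) ρ p) (A ℓ) := by
    refine IsBBB.divideOn_self ⟨hbbℓ, hbbℓeq⟩ hαℓ.le hρ0 hρ1 fun g hg hpos => ?_
    have hgood :=
      mem_filter.mpr ⟨mem_of_notMem_of_existsUnique hpart hlb hg, hp.isGood_of_pos hpos⟩
    exact (div_le_iff₀ (mul_pos hαℓ hpos)).mp (le_of_max_image_le hβ hgood)
  have hb : IsBBB (v b) αb (divideOn (A ℓ) ρ p) (A b) := by
    refine IsBBB.divideOn_of_disjoint ⟨hbbb, hbbbeq⟩ hdisj hαb.le hρ0 hρ1 fun c hc hneg => ?_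
    have hchore := hp.isChore_of_neg hneg
    exact (div_le_iff_of_neg (hchore b)).mp (le_of_max_image_le hγ (mem_filter.mpr ⟨hc, hchore⟩))
  obtain ⟨hpg', hpc', hpn'⟩ := hp.divideOn (A ℓ) hρ0
  exact ⟨hpg', hpc', hpn', hℓ.1, hℓ.2, hb.1, hb.2⟩

open Classical in
/-- Raising the prices of the envious agent `ℓ`'s items by the factor `1/ρ`,
where `ρ = max(β, γ) ∈ (0, 1]`, preserves market equilibrium
(with best-bang-per-buck values `αℓ·ρ` for `ℓ` and `αb` for `b`).
`Finset.max : Finset ℝ → WithBot ℝ` encodes "max over an empty set is `-∞`". -/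
theorem price_raise_preserves_marketEq
    {ι : Type*} [Fintype ι] [DecidableEq ι]
    (v : Fin 2 → ι → ℝ) (A : Fin 2 → Finset ι) (p : ι → ℝ)
    (w : Fin 2 → ℝ) (hw : ∀ i, 0 < w i)
    (ℓ b : Fin 2) (hlb : ℓ ≠ b)
    (hpart : ∀ j : ι, ∃! i, j ∈ A i)
    -- price sign conditions of the market equilibrium (A, p):
    (hpg : ∀ j : ι, IsGood v j → 0 < p j)
    (hpc : ∀ j : ι, IsChore v j → p j < 0)
    (hpn : ∀ j : ι, IsNeutral v j → p j = 0)
    -- best-bang-per-buck values: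
    (αℓ αb : ℝ) (hαℓ : 0 < αℓ) (hαb : 0 < αb)
    (hbbℓ : ∀ j : ι, v ℓ j ≤ αℓ * p j) (hbbℓeq : ∀ j ∈ A ℓ, v ℓ j = αℓ * p j)
    (hbbb : ∀ j : ι, v b j ≤ αb * p j) (hbbbeq : ∀ j ∈ A b, v b j = αb * p j)
    -- agent ℓ WEF1-envies agent b:
    (henvy : WEF1Envies (v ℓ) (w ℓ) (w b) (A ℓ) (A b))
    -- both bundles contain a good or a chore:
    (hl : ∃ j ∈ A ℓ, IsGood v j ∨ IsChore v j)
    (hb : ∃ j ∈ A b, IsGood v j ∨ IsChore v j) :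
    let β : WithBot ℝ :=
      (((A b).filter (fun g => IsGood v g)).image (fun g => v ℓ g / (αℓ * p g))).max
    let γ : WithBot ℝ :=
      (((A ℓ).filter (fun c => IsChore v c)).image (fun c => αb * p c / v b c)).max
    ∃ ρ : ℝ, max β γ = (ρ : WithBot ℝ) ∧ 0 < ρ ∧ ρ ≤ 1 ∧
      (let phat : ι → ℝ := fun j => if j ∈ A ℓ then p j / ρ else p j
       (∀ j : ι, IsGood v j → 0 < phat j) ∧
       (∀ j : ι, IsChore v j → phat j < 0) ∧
       (∀ j : ι, IsNeutral v j → phat j = 0) ∧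
       (∀ j : ι, v ℓ j ≤ (αℓ * ρ) * phat j) ∧
       (∀ j ∈ A ℓ, v ℓ j = (αℓ * ρ) * phat j) ∧
       (∀ j : ι, v b j ≤ αb * phat j) ∧
       (∀ j ∈ A b, v b j = αb * phat j)) :=
  price_raise_preserves_marketEq_general v A p w hw ℓ b hlb hpart hpg hpc hpn αℓ αb hαℓ hαb hbbℓ
    hbbℓeq hbbb hbbbeq henvy
end

section
/- Every fair division instance with two agents, additive valuations, and positive entitlements admits an allocation that is both WEF1 and fractionally Pareto-optimal (fPO). -/
open Finset

/-! Sort the items on which both agents have nonzero values of the same sign by the ratio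
`v 1 j / v 0 j` and transfer them in this order, goods from agent 1 to agent 0 and chores from
agent 0 to agent 1. Every allocation along the way gives each item to an agent maximising
`ρ * v 0 j` resp. `v 1 j` for some exchange rate `ρ > 0`, so it maximises a weighted welfare and is
fPO; for the same reason the two agents never envy each other at the same time. Agent 1 does not
envy at the start and agent 0 does not envy at the end, so some transfer of a single item `x`
goes from an allocation where agent 1 does not envy to one where agent 0 does not envy; whether
agent 0 envies once `x` is discarded decides which of the two is WEF1. -/

section WeightedEnvy

variable {ι : Type*}

def WEnvies (v : ι → ℝ) (wi wj : ℝ) (Ai Aj : Finset ι) : Prop :=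
  bundleVal v Ai / wi < bundleVal v Aj / wj

theorem not_wEnvies_of_nonneg_of_nonpos {v : ι → ℝ} {wi wj : ℝ} {Ai Aj : Finset ι}
    (hwi : 0 ≤ wi) (hwj : 0 ≤ wj) (hi : ∀ t ∈ Ai, 0 ≤ v t) (hj : ∀ t ∈ Aj, v t ≤ 0) :
    ¬ WEnvies v wi wj Ai Aj :=
  not_lt.2 <| (div_nonpos_of_nonpos_of_nonneg (sum_nonpos hj) hwj).trans
    (div_nonneg (sum_nonneg hi) hwi)

theorem not_wEnvies_of_wEnvies_of_ratio {v v' : ι → ℝ} {ρ wi wj : ℝ} {S T : Finset ι}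
    (hρ : 0 ≤ ρ) (hwi : 0 < wi) (hwj : 0 < wj)
    (hS : ∀ t ∈ S, v' t ≤ ρ * v t) (hT : ∀ t ∈ T, ρ * v t ≤ v' t)
    (h : WEnvies v wi wj S T) : ¬ WEnvies v' wj wi T S := by
  have hS' : bundleVal v' S ≤ ρ * bundleVal v S := by
    rw [bundleVal, bundleVal, mul_sum]; exact sum_le_sum hS
  have hT' : ρ * bundleVal v T ≤ bundleVal v' T := by
    rw [bundleVal, bundleVal, mul_sum]; exact sum_le_sum hT
  rw [WEnvies, div_lt_div_iff₀ hwi hwj] at h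
  rw [WEnvies, div_lt_div_iff₀ hwj hwi, not_lt]
  calc bundleVal v' S * wj ≤ ρ * (bundleVal v S * wj) := by nlinarith
    _ ≤ ρ * (bundleVal v T * wi) := mul_le_mul_of_nonneg_left h.le hρ
    _ ≤ bundleVal v' T * wi := by nlinarith

theorem not_WEF1Envies_of_not_wEnvies_erase [DecidableEq ι] {v : ι → ℝ} {wi wj : ℝ}
    {Ai Aj : Finset ι} (hdisj : Disjoint Ai Aj) (x : ι)
    (h : ¬ WEnvies v wi wj (Ai.erase x) (Aj.erase x)) : ¬ WEF1Envies v wi wj Ai Aj := by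
  rintro ⟨hij, hg, hc⟩
  by_cases hxi : x ∈ Ai
  · rw [erase_eq_of_notMem (disjoint_left.1 hdisj hxi)] at h
    exact h (hc x hxi)
  rw [erase_eq_of_notMem hxi] at h
  by_cases hxj : x ∈ Aj
  · exact h (hg x hxj)
  · rw [erase_eq_of_notMem hxj] at h
    exact h hij

end WeightedEnvy

section FractionalParetoOptimality

variable {ι : Type*} [Fintype ι]

def IsFracParetoOptimal {n : ℕ} (v : Fin n → ι → ℝ) (A : Fin n → Finset ι) : Prop :=
  ¬ ∃ y : Fin n → ι → ℝ, FracAlloc y ∧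
    (∀ i, bundleVal (v i) (A i) ≤ fracVal (v i) (y i)) ∧
    ∃ i, bundleVal (v i) (A i) < fracVal (v i) (y i)

theorem fracVal_indicator [DecidableEq ι] (v : ι → ℝ) (S : Finset ι) :
    fracVal v (fun j => if j ∈ S then 1 else 0) = bundleVal v S := by
  simp [fracVal, bundleVal]

theorem sum_mul_fracVal_eq_sum_sum {n : ℕ} (v : Fin n → ι → ℝ) (c : Fin n → ℝ)
    (x : Fin n → ι → ℝ) :
    ∑ i, c i * fracVal (v i) (x i) = ∑ j, ∑ i, c i * v i j * x i j := by
  simp only [fracVal, mul_sum, mul_assoc]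
  exact sum_comm

/-- Such an allocation maximises the `c`-weighted welfare `∑ i, c i * v i (x i)` over all
fractional allocations `x`. -/
theorem isFracParetoOptimal_of_weighted_max {n : ℕ} (v : Fin n → ι → ℝ)
    (A : Fin n → Finset ι) (c : Fin n → ℝ) (hc : ∀ i, 0 < c i) (hA : ∀ j, ∃! i, j ∈ A i)
    (hmax : ∀ i, ∀ j ∈ A i, ∀ k, c k * v k j ≤ c i * v i j) :
    IsFracParetoOptimal v A := by
  classical
  rintro ⟨y, ⟨hy0, hy1⟩, hle, i₀, hlt⟩
  set z : Fin n → ι → ℝ := fun i j => if j ∈ A i then 1 else 0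
  have hpoint : ∀ j, ∑ i, c i * v i j * y i j ≤ ∑ i, c i * v i j * z i j := by
    intro j
    obtain ⟨o, ho, huniq⟩ := hA j
    calc ∑ i, c i * v i j * y i j ≤ ∑ i, c o * v o j * y i j :=
          sum_le_sum fun i _ => mul_le_mul_of_nonneg_right (hmax o j ho i) (hy0 i j)
      _ = c o * v o j := by rw [← mul_sum, hy1, mul_one]
      _ = ∑ i, c i * v i j * z i j := by
          rw [sum_eq_single o (fun i _ hi => by simp [z, mt (huniq i) hi]) (by simp)]
          simp [z, ho]
  have hwelfare : ∑ i, c i * fracVal (v i) (y i) ≤ ∑ i, c i * bundleVal (v i) (A i) := by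
    simp only [← fracVal_indicator]
    rw [sum_mul_fracVal_eq_sum_sum, sum_mul_fracVal_eq_sum_sum]
    exact sum_le_sum fun j _ => hpoint j
  have hdom : ∑ i, c i * bundleVal (v i) (A i) < ∑ i, c i * fracVal (v i) (y i) :=
    sum_lt_sum (fun i _ => mul_le_mul_of_nonneg_left (hle i) (hc i).le)
      ⟨i₀, mem_univ _, mul_lt_mul_of_pos_left hlt (hc i₀)⟩
  exact hwelfare.not_gt hdom

end FractionalParetoOptimality

section RatioSplit

variable {ι : Type*}

def IsRatioSplit (v : Fin 2 → ι → ℝ) (B : Finset ι) : Prop :=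
  ∃ ρ > 0, (∀ j ∈ B, v 1 j ≤ ρ * v 0 j) ∧ ∀ j ∉ B, ρ * v 0 j ≤ v 1 j

variable [Fintype ι] [DecidableEq ι]

def IsWEF1Split (v : Fin 2 → ι → ℝ) (w : Fin 2 → ℝ) (B : Finset ι) : Prop :=
  ¬ WEF1Envies (v 0) (w 0) (w 1) B Bᶜ ∧ ¬ WEF1Envies (v 1) (w 1) (w 0) Bᶜ B

theorem existsUnique_mem_split (B : Finset ι) (j : ι) : ∃! i, j ∈ ![B, Bᶜ] i := by
  by_cases hj : j ∈ B
  · exact ⟨0, by simpa using hj, fun i hi => by fin_cases i <;> simp_all⟩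
  · exact ⟨1, by simpa using hj, fun i hi => by fin_cases i <;> simp_all⟩

theorem IsRatioSplit.isFracParetoOptimal {v : Fin 2 → ι → ℝ} {B : Finset ι}
    (hB : IsRatioSplit v B) : IsFracParetoOptimal v ![B, Bᶜ] := by
  obtain ⟨ρ, hρ, hin, hout⟩ := hB
  refine isFracParetoOptimal_of_weighted_max v _ ![ρ, 1] (fun i => by fin_cases i <;> simp [hρ])
    (existsUnique_mem_split B) fun i j hj k => ?_
  fin_cases i <;> fin_cases k <;> simp_all

theorem IsRatioSplit.not_wEnvies_of_subset {v : Fin 2 → ι → ℝ} {w : Fin 2 → ℝ}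
    {B S T : Finset ι} (hB : IsRatioSplit v B) (hw0 : 0 < w 0) (hw1 : 0 < w 1)
    (hS : S ⊆ B) (hT : T ⊆ Bᶜ) (h : WEnvies (v 0) (w 0) (w 1) S T) :
    ¬ WEnvies (v 1) (w 1) (w 0) T S := by
  obtain ⟨ρ, hρ, hin, hout⟩ := hB
  exact not_wEnvies_of_wEnvies_of_ratio hρ.le hw0 hw1 (fun j hj => hin j (hS hj))
    (fun j hj => hout j (mem_compl.1 (hT hj))) h

theorem compl_erase_eq_of_erase_eq {B B' : Finset ι} {x : ι} (h : B.erase x = B'.erase x) :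
    Bᶜ.erase x = B'ᶜ.erase x := by
  ext j
  have := Finset.ext_iff.1 h j
  simp only [mem_erase, mem_compl] at this ⊢
  tauto

/-- Which of the two splits is WEF1 depends on whether agent 0 envies once `x` is discarded. -/
theorem IsRatioSplit.isWEF1Split_or {v : Fin 2 → ι → ℝ} {w : Fin 2 → ℝ} {B B' : Finset ι}
    (hB : IsRatioSplit v B) (hw0 : 0 < w 0) (hw1 : 0 < w 1) {x : ι}
    (hx : B.erase x = B'.erase x) (h1 : ¬ WEnvies (v 1) (w 1) (w 0) Bᶜ B)
    (h0 : ¬ WEnvies (v 0) (w 0) (w 1) B' B'ᶜ) : IsWEF1Split v w B ∨ IsWEF1Split v w B' := by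
  by_cases h : WEnvies (v 0) (w 0) (w 1) (B.erase x) (Bᶜ.erase x)
  · have h' := hB.not_wEnvies_of_subset hw0 hw1 (erase_subset x B) (erase_subset x Bᶜ) h
    rw [hx, compl_erase_eq_of_erase_eq hx] at h'
    exact Or.inr ⟨fun h'' => h0 h''.1,
      not_WEF1Envies_of_not_wEnvies_erase disjoint_compl_left x h'⟩
  · exact Or.inl ⟨not_WEF1Envies_of_not_wEnvies_erase disjoint_compl_right x h,
      fun h'' => h1 h''.1⟩

theorem exists_isWEF1Split_of_chain {v : Fin 2 → ι → ℝ} {w : Fin 2 → ℝ}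
    (hw0 : 0 < w 0) (hw1 : 0 < w 1) (B : ℕ → Finset ι) (m : ℕ)
    (hB : ∀ k, IsRatioSplit v (B k)) (hstep : ∀ k < m, ∃ x, (B k).erase x = (B (k + 1)).erase x)
    (h0 : ¬ WEnvies (v 1) (w 1) (w 0) (B 0)ᶜ (B 0))
    (hm : ¬ WEnvies (v 0) (w 0) (w 1) (B m) (B m)ᶜ) :
    ∃ B', IsRatioSplit v B' ∧ IsWEF1Split v w B' := by
  suffices h : ∀ k ≤ m, (∃ B', IsRatioSplit v B' ∧ IsWEF1Split v w B') ∨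
      ¬ WEnvies (v 1) (w 1) (w 0) (B k)ᶜ (B k) by
    rcases h m le_rfl with h | h
    · exact h
    · exact ⟨B m, hB m, fun h' => hm h'.1, fun h' => h h'.1⟩
  intro k hk
  induction k with
  | zero => exact Or.inr h0
  | succ k ih =>
    rcases ih (Nat.le_of_succ_le hk) with h | h
    · exact Or.inl h
    by_cases h1 : WEnvies (v 1) (w 1) (w 0) (B (k + 1))ᶜ (B (k + 1))
    · obtain ⟨x, hx⟩ := hstep k hk
      have h0' : ¬ WEnvies (v 0) (w 0) (w 1) (B (k + 1)) (B (k + 1))ᶜ := fun h0' =>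
        (hB (k + 1)).not_wEnvies_of_subset hw0 hw1 subset_rfl subset_rfl h0' h1
      exact Or.inl (((hB k).isWEF1Split_or hw0 hw1 hx h h0').elim
        (fun hk => ⟨B k, hB k, hk⟩) fun hk => ⟨B (k + 1), hB (k + 1), hk⟩)
    · exact Or.inr h1

end RatioSplit

section Sweep

variable {ι : Type*}

/-- Positive exactly when `v 0 j` and `v 1 j` are nonzero of the same sign, as `x / 0 = 0`. -/
noncomputable def valueRatio (v : Fin 2 → ι → ℝ) (j : ι) : ℝ := v 1 j / v 0 j

theorem eq_valueRatio_mul {v : Fin 2 → ι → ℝ} {j : ι} (hr : 0 < valueRatio v j) :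
    v 1 j = valueRatio v j * v 0 j :=
  (div_mul_cancel₀ _ fun h => by simp [valueRatio, h] at hr).symm

theorem signs_of_not_pos_valueRatio {v : Fin 2 → ι → ℝ} {j : ι} (hr : ¬ 0 < valueRatio v j) :
    (0 < v 1 j → v 0 j ≤ 0) ∧ (v 1 j < 0 → 0 ≤ v 0 j) := by
  rw [valueRatio, div_pos_iff] at hr
  push Not at hr
  exact hr

theorem exists_pos_separating {α : Type*} (f : α → ℝ) (s t : Finset α)
    (ht : ∀ b ∈ t, 0 < f b) (hst : ∀ a ∈ s, ∀ b ∈ t, f a ≤ f b) :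
    ∃ ρ > 0, (∀ a ∈ s, f a ≤ ρ) ∧ ∀ b ∈ t, ρ ≤ f b := by
  rcases t.eq_empty_or_nonempty with rfl | ht'
  · obtain ⟨M, hM⟩ := (s.image f).bddAbove
    exact ⟨max M 1, by positivity,
      fun a ha => (hM (mem_coe.2 (mem_image_of_mem f ha))).trans (le_max_left M 1), by simp⟩
  · obtain ⟨b, hb, hmin⟩ := t.exists_min_image f ht'
    exact ⟨f b, ht b hb, fun a ha => hst a ha b hb, hmin⟩

theorem toFinset_take_add_one {α : Type*} [DecidableEq α] {l : List α} {k : ℕ}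
    (hk : k < l.length) : (l.take (k + 1)).toFinset = insert l[k] (l.take k).toFinset := by
  rw [List.take_add_one, List.getElem?_eq_getElem hk, Option.toList_some, List.toFinset_append]
  simp

variable [Fintype ι]

noncomputable def sweepList (v : Fin 2 → ι → ℝ) : List ι :=
  (univ.filter fun j => 0 < valueRatio v j).toList.insertionSort
    fun a b => valueRatio v a ≤ valueRatio v b

theorem mem_sweepList {v : Fin 2 → ι → ℝ} {j : ι} : j ∈ sweepList v ↔ 0 < valueRatio v j := by
  simp [sweepList, (List.perm_insertionSort _ _).mem_iff]

theorem pairwise_sweepList (v : Fin 2 → ι → ℝ) :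
    (sweepList v).Pairwise fun a b => valueRatio v a ≤ valueRatio v b := by
  have : Std.Total fun a b => valueRatio v a ≤ valueRatio v b := ⟨fun a b => le_total _ _⟩
  have : IsTrans ι fun a b => valueRatio v a ≤ valueRatio v b := ⟨fun _ _ _ => le_trans⟩
  exact List.pairwise_insertionSort _ _

variable [DecidableEq ι]

/-- Agent 0's bundle once the items of `S` are swept: items of `S` are placed as for a very
large exchange rate, the other items as for an exchange rate close to `0`. -/
noncomputable def sweepSplit (v : Fin 2 → ι → ℝ) (S : Finset ι) : Finset ι :=
  univ.filter fun j => if j ∈ S then 0 < v 0 j else v 1 j < 0 ∨ (v 1 j = 0 ∧ 0 ≤ v 0 j)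

theorem mem_sweepSplit {v : Fin 2 → ι → ℝ} {S : Finset ι} {j : ι} :
    j ∈ sweepSplit v S ↔ if j ∈ S then 0 < v 0 j else v 1 j < 0 ∨ (v 1 j = 0 ∧ 0 ≤ v 0 j) := by
  simp [sweepSplit]

theorem sweepSplit_erase_eq_insert_erase (v : Fin 2 → ι → ℝ) (S : Finset ι) (x : ι) :
    (sweepSplit v S).erase x = (sweepSplit v (insert x S)).erase x := by
  ext j
  by_cases hj : j = x <;> simp [mem_sweepSplit, hj]

theorem isRatioSplit_sweepSplit {v : Fin 2 → ι → ℝ} {S : Finset ι}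
    (hS : ∀ j ∈ S, 0 < valueRatio v j)
    (hsorted : ∀ a ∈ S, ∀ b ∉ S, 0 < valueRatio v b → valueRatio v a ≤ valueRatio v b) :
    IsRatioSplit v (sweepSplit v S) := by
  obtain ⟨ρ, hρ, hle, hge⟩ := exists_pos_separating (valueRatio v) S
    (univ.filter fun b => b ∉ S ∧ 0 < valueRatio v b) (fun b hb => (mem_filter.1 hb).2.2)
    (fun a ha b hb => hsorted a ha b (mem_filter.1 hb).2.1 (mem_filter.1 hb).2.2)
  have hge' : ∀ j ∉ S, 0 < valueRatio v j → ρ ≤ valueRatio v j := fun j hj hr =>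
    hge j (mem_filter.2 ⟨mem_univ j, hj, hr⟩)
  refine ⟨ρ, hρ, fun j hj => ?_, fun j hj => ?_⟩ <;> rw [mem_sweepSplit] at hj <;>
    split_ifs at hj with hjS
  · nlinarith [eq_valueRatio_mul (hS j hjS), hle j hjS]
  · by_cases hr : 0 < valueRatio v j
    · have := eq_valueRatio_mul hr
      rcases hj with hj | ⟨hj, -⟩ <;> nlinarith [hge' j hjS hr]
    · rcases hj with hj | ⟨hj, hj'⟩
      · nlinarith [(signs_of_not_pos_valueRatio hr).2 hj]
      · nlinarith
  · nlinarith [eq_valueRatio_mul (hS j hjS), hle j hjS]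
  · push Not at hj
    by_cases hr : 0 < valueRatio v j
    · have := eq_valueRatio_mul hr
      nlinarith [hge' j hjS hr]
    · rcases hj.1.lt_or_eq with hj1 | hj1
      · nlinarith [(signs_of_not_pos_valueRatio hr).1 hj1]
      · nlinarith [hj.2 hj1.symm]

theorem not_wEnvies_sweepSplit_empty (v : Fin 2 → ι → ℝ) {w : Fin 2 → ℝ} (hw0 : 0 ≤ w 0)
    (hw1 : 0 ≤ w 1) : ¬ WEnvies (v 1) (w 1) (w 0) (sweepSplit v ∅)ᶜ (sweepSplit v ∅) := by
  refine not_wEnvies_of_nonneg_of_nonpos hw1 hw0 (fun j hj => ?_) fun j hj => ?_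
  · simp only [mem_compl, mem_sweepSplit, notMem_empty, if_false] at hj
    push Not at hj
    exact hj.1
  · simp only [mem_sweepSplit, notMem_empty, if_false] at hj
    rcases hj with hj | ⟨hj, -⟩ <;> linarith

theorem not_wEnvies_sweepSplit_of_forall {v : Fin 2 → ι → ℝ} {w : Fin 2 → ℝ} (hw0 : 0 ≤ w 0)
    (hw1 : 0 ≤ w 1) {S : Finset ι} (hS : ∀ j, 0 < valueRatio v j → j ∈ S) :
    ¬ WEnvies (v 0) (w 0) (w 1) (sweepSplit v S) (sweepSplit v S)ᶜ := by
  refine not_wEnvies_of_nonneg_of_nonpos hw0 hw1 (fun j hj => ?_) fun j hj => ?_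
  · rw [mem_sweepSplit] at hj
    split_ifs at hj with hjS
    · exact hj.le
    · rcases hj with hj | ⟨-, hj⟩
      · exact (signs_of_not_pos_valueRatio (mt (hS j) hjS)).2 hj
      · exact hj
  · rw [mem_compl, mem_sweepSplit] at hj
    split_ifs at hj with hjS
    · exact not_lt.1 hj
    · push Not at hj
      rcases hj.1.lt_or_eq with hj1 | hj1
      · exact (signs_of_not_pos_valueRatio (mt (hS j) hjS)).1 hj1
      · exact (hj.2 hj1.symm).le

theorem isRatioSplit_sweepSplit_take (v : Fin 2 → ι → ℝ) (k : ℕ) :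
    IsRatioSplit v (sweepSplit v ((sweepList v).take k).toFinset) := by
  have hsplit := pairwise_sweepList v
  rw [← List.take_append_drop k (sweepList v), List.pairwise_append] at hsplit
  refine isRatioSplit_sweepSplit
    (fun j hj => mem_sweepList.1 (List.mem_of_mem_take (List.mem_toFinset.1 hj)))
    fun a ha b hb hr => hsplit.2.2 a (List.mem_toFinset.1 ha) b ?_
  have hb' := mem_sweepList.2 hr
  rw [← List.take_append_drop k (sweepList v), List.mem_append] at hb'
  exact hb'.resolve_left (mt List.mem_toFinset.2 hb)

theorem exists_isRatioSplit_isWEF1Split (v : Fin 2 → ι → ℝ) {w : Fin 2 → ℝ}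
    (hw : ∀ i, 0 < w i) :
    ∃ B, IsRatioSplit v B ∧ IsWEF1Split v w B := by
  set l := sweepList v
  refine exists_isWEF1Split_of_chain (hw 0) (hw 1) (fun k => sweepSplit v (l.take k).toFinset)
    l.length (isRatioSplit_sweepSplit_take v) (fun k hk => ⟨l[k], ?_⟩) ?_ ?_
  · rw [toFinset_take_add_one hk]
    exact sweepSplit_erase_eq_insert_erase v _ _
  · simpa using not_wEnvies_sweepSplit_empty v (hw 0).le (hw 1).le
  · refine not_wEnvies_sweepSplit_of_forall (hw 0).le (hw 1).le fun j hj => ?_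
    simpa [List.take_length] using mem_sweepList.2 hj

end Sweep

/-- Every two-agent fair division instance with additive valuations and
positive entitlements admits an allocation that is WEF1 and fractionally
Pareto-optimal. -/
theorem wef1_fPO_exists_two_agents
    {ι : Type*} [Fintype ι] [DecidableEq ι]
    (v : Fin 2 → ι → ℝ) (w : Fin 2 → ℝ) (hw : ∀ i, 0 < w i) :
    ∃ A : Fin 2 → Finset ι,
      (∀ j : ι, ∃! i, j ∈ A i) ∧
      (∀ i j, i ≠ j → ¬ WEF1Envies (v i) (w i) (w j) (A i) (A j)) ∧
      ¬ ∃ y : Fin 2 → ι → ℝ, FracAlloc y ∧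
          (∀ i, bundleVal (v i) (A i) ≤ fracVal (v i) (y i)) ∧
          (∃ i, bundleVal (v i) (A i) < fracVal (v i) (y i)) := by
  obtain ⟨B, hB, h01, h10⟩ := exists_isRatioSplit_isWEF1Split v hw
  refine ⟨![B, Bᶜ], existsUnique_mem_split B, fun i j hij => ?_, hB.isFracParetoOptimal⟩
  fin_cases i <;> fin_cases j
  exacts [absurd rfl hij, h01, h10, absurd rfl hij]
end
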